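/- arXiv:1006.3407 — 3 statements merged into one kernel-verified Lean document; each statement's English description precedes it below -/
import Mathlib

section
/- In any alternative ring, any subring generated by two elements is associative (Artin's theorem). -/
/-!
By trilinearity of the associator `[x, y, z] = (x y) z - x (y z)` it suffices to show
`[p, q, r] = 0` for monomials `p, q, r` in `a` and `b`, by induction on the total degree `n`.
Once all associators of smaller degree vanish, every monomial of degree `< n` can be
rebracketed as `e p'` with `e ∈ {a, b}`, and the Teichmüller identity
`[e p', q, r] = e [p', q, r] + [e, p' q, r] - [e, p', q r] + [e, p', q] r`
reduces the claim to associators whose first argument is a generator. The same identity together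
with the cyclic symmetry of the associator reduces these to `[c, d, r]` with `c, d ∈ {a, b}`.
Then either `c = d`, or the leading generator of `r` is `c` or `d`, and the Moufang-type identities
`[x, y, x z] = [x, y, z] x` and `[x, y, y z] = [x, y, z] y` lower the degree.
-/

theorem AddMonoidHom.apply₃_eq_zero_of_mem_closure {M N P Q : Type*} [AddGroup M] [AddGroup N]
    [AddGroup P] [AddCommGroup Q] (f : M →+ N →+ P →+ Q) {s : Set M} {t : Set N} {u : Set P}
    (h : ∀ x ∈ s, ∀ y ∈ t, ∀ z ∈ u, f x y z = 0) {x : M} {y : N} {z : P}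
    (hx : x ∈ AddSubgroup.closure s) (hy : y ∈ AddSubgroup.closure t)
    (hz : z ∈ AddSubgroup.closure u) : f x y z = 0 := by
  have hz' : ∀ x ∈ s, ∀ y ∈ t, f x y z = 0 := fun x hx y hy =>
    (f x y).eqOn_closure (g := 0) (h x hx y hy) hz
  have hy' : ∀ x ∈ s, f x y z = 0 := fun x hx =>
    ((f x).flip z).eqOn_closure (g := 0) (hz' x hx) hy
  exact ((f.flip y).flip z).eqOn_closure (g := 0) hy' hx

class IsLeftAlternative (R : Type*) [Mul R] : Prop where
  mul_self_mul : ∀ x y : R, x * (x * y) = x * x * y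

class IsRightAlternative (R : Type*) [Mul R] : Prop where
  mul_mul_self : ∀ x y : R, x * y * y = x * (y * y)

section Identities

variable {R : Type*} [NonUnitalNonAssocRing R]

theorem associator_self_left [IsLeftAlternative R] (x y : R) : associator x x y = 0 := by
  rw [associator_apply, ← IsLeftAlternative.mul_self_mul, sub_self]

theorem associator_self_right [IsRightAlternative R] (x y : R) : associator x y y = 0 := by
  rw [associator_apply, IsRightAlternative.mul_mul_self, sub_self]

theorem associator_swap_left [IsLeftAlternative R] (x y z : R) :
    associator y x z = -associator x y z := by
  have h := associator_self_left (x + y) z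
  simp only [← AddMonoidHom.associator_apply, map_add, AddMonoidHom.add_apply] at h
  simp only [AddMonoidHom.associator_apply, associator_self_left, zero_add, add_zero] at h
  exact eq_neg_of_add_eq_zero_left h

theorem associator_swap_right [IsRightAlternative R] (x y z : R) :
    associator x z y = -associator x y z := by
  have h := associator_self_right x (y + z)
  simp only [← AddMonoidHom.associator_apply, map_add, AddMonoidHom.add_apply] at h
  simp only [AddMonoidHom.associator_apply, associator_self_right, zero_add, add_zero] at h
  exact eq_neg_of_add_eq_zero_left h

variable [IsLeftAlternative R] [IsRightAlternative R]

theorem associator_cycle (x y z : R) : associator x y z = associator y z x := by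
  rw [associator_swap_right y x z, associator_swap_left x y z, neg_neg]

theorem associator_flexible (x y : R) : associator x y x = 0 := by
  rw [associator_swap_right, associator_self_left, neg_zero]

theorem associator_fst_mul (x y z : R) : associator x y (x * z) = associator x y z * x := by
  have h₁ := associator_cocycle y x x z
  have h₂ := associator_cocycle z y x x
  rw [associator_self_left, associator_self_right, mul_zero, zero_mul] at h₁
  rw [associator_self_right, associator_self_right, mul_zero, associator_cycle z (y * x),
    associator_cycle z y (x * x), associator_cycle z y x, associator_swap_left x y z, neg_mul] at h₂
  rw [← neg_neg (associator x y (x * z)), ← associator_swap_left]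
  linear_combination (norm := abel) h₁ + h₂

theorem associator_snd_mul (x y z : R) : associator x y (y * z) = associator x y z * y := by
  rw [← neg_neg (associator x y (y * z)), ← associator_swap_left, associator_fst_mul,
    associator_swap_left, neg_mul, neg_neg]

end Identities

theorem associator_mul_left_eq_zero {R : Type*} [NonUnitalNonAssocRing R] {w x y z : R}
    (h₁ : associator x y z = 0) (h₂ : associator w x y = 0) (h₃ : associator w (x * y) z = 0)
    (h₄ : associator w x (y * z) = 0) : associator (w * x) y z = 0 := by
  have h := associator_cocycle w x y z
  rw [h₁, h₂, h₃, h₄, mul_zero, zero_mul] at h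
  simpa using h

theorem Set.eq_or_eq_or_eq_of_mem_pair {α : Type*} {a b c d e : α} (hc : c ∈ ({a, b} : Set α))
    (hd : d ∈ ({a, b} : Set α)) (he : e ∈ ({a, b} : Set α)) : c = d ∨ e = c ∨ e = d := by
  simp only [Set.mem_insert_iff, Set.mem_singleton_iff] at hc hd he
  rcases hc with rfl | rfl <;> rcases hd with rfl | rfl <;> rcases he with rfl | rfl <;> simp

inductive IsMonomial {R : Type*} [Mul R] (S : Set R) : ℕ → R → Prop
  | of_mem {x : R} : x ∈ S → IsMonomial S 1 x
  | mul {m n : ℕ} {x y : R} : IsMonomial S m x → IsMonomial S n y → IsMonomial S (m + n) (x * y)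

namespace IsMonomial

variable {R : Type*} [Mul R] {S : Set R} {n : ℕ} {x : R}

theorem one_le (h : IsMonomial S n x) : 1 ≤ n := by
  induction h <;> omega

theorem mem_of_one (h : IsMonomial S 1 x) : x ∈ S := by
  generalize hn : 1 = n at h
  induction h with
  | of_mem hx => exact hx
  | mul hx hy => have := hx.one_le; have := hy.one_le; omega

theorem exists_of_mem_closure (h : x ∈ Subsemigroup.closure S) : ∃ n, IsMonomial S n x := by
  induction h using Subsemigroup.closure_induction with
  | mem x hx => exact ⟨1, of_mem hx⟩
  | mul x y _ _ hx hy =>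
    obtain ⟨m, hx⟩ := hx
    obtain ⟨n, hy⟩ := hy
    exact ⟨m + n, hx.mul hy⟩

end IsMonomial

section Monomials

variable {R : Type*} [NonUnitalNonAssocRing R]

def AssociatorVanishesBelow (S : Set R) (n : ℕ) : Prop :=
  ∀ ⦃i j k : ℕ⦄ ⦃p q r : R⦄, IsMonomial S i p → IsMonomial S j q → IsMonomial S k r →
    i + j + k < n → associator p q r = 0

theorem IsMonomial.exists_eq_mem_mul {S : Set R} {n i : ℕ} {p : R}
    (h : AssociatorVanishesBelow S n) (hp : IsMonomial S i p) (hi : 2 ≤ i) (hin : i < n) :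
    ∃ e ∈ S, ∃ p', IsMonomial S (i - 1) p' ∧ p = e * p' := by
  induction hp with
  | of_mem => omega
  | @mul m k u v hu hv ihu _ =>
    obtain hm | hm := Nat.lt_or_ge m 2
    · obtain rfl : m = 1 := by have := hu.one_le; omega
      exact ⟨u, hu.mem_of_one, v, by rwa [Nat.add_sub_cancel_left], rfl⟩
    · obtain ⟨e, he, u', hu', rfl⟩ := ihu hm (by have := hv.one_le; omega)
      refine ⟨e, he, u' * v, (by omega : m - 1 + k = m + k - 1) ▸ hu'.mul hv, ?_⟩
      exact sub_eq_zero.mp (h (.of_mem he) hu' hv (by omega))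

variable [IsLeftAlternative R] [IsRightAlternative R] {a b : R} {n : ℕ}

theorem associator_eq_zero_of_mem_of_mem (h : AssociatorVanishesBelow {a, b} n) {c d r : R}
    {k : ℕ} (hc : c ∈ ({a, b} : Set R)) (hd : d ∈ ({a, b} : Set R)) (hr : IsMonomial {a, b} k r)
    (hk : k + 2 ≤ n) : associator c d r = 0 := by
  obtain hk1 | hk2 := Nat.lt_or_ge k 2
  · obtain rfl : k = 1 := by have := hr.one_le; omega
    rcases Set.eq_or_eq_or_eq_of_mem_pair hc hd hr.mem_of_one with rfl | rfl | rfl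
    · exact associator_self_left c r
    · exact associator_flexible r d
    · exact associator_self_right c r
  · obtain ⟨e, he, r', hr', rfl⟩ := hr.exists_eq_mem_mul h hk2 (by omega)
    have hcdr' : associator c d r' = 0 := h (.of_mem hc) (.of_mem hd) hr' (by omega)
    rcases Set.eq_or_eq_or_eq_of_mem_pair hc hd he with rfl | rfl | rfl
    · exact associator_self_left c _
    · rw [associator_fst_mul, hcdr', zero_mul]
    · rw [associator_snd_mul, hcdr', zero_mul]

theorem associator_eq_zero_of_mem (h : AssociatorVanishesBelow {a, b} n) {c q r : R}
    {j k : ℕ} (hc : c ∈ ({a, b} : Set R)) (hq : IsMonomial {a, b} j q)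
    (hr : IsMonomial {a, b} k r) (hn : 1 + j + k ≤ n) : associator c q r = 0 := by
  induction j using Nat.strong_induction_on generalizing c q r k with
  | _ j ih =>
  obtain hj1 | hj2 := Nat.lt_or_ge j 2
  · obtain rfl : j = 1 := by have := hq.one_le; omega
    exact associator_eq_zero_of_mem_of_mem h hc hq.mem_of_one hr (by omega)
  · obtain ⟨e, he, q', hq', rfl⟩ := hq.exists_eq_mem_mul h hj2 (by have := hr.one_le; omega)
    have := hr.one_le
    rw [associator_cycle]
    refine associator_mul_left_eq_zero (h hq' hr (.of_mem hc) (by omega))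
      (h (.of_mem he) hq' hr (by omega)) ?_
      (ih _ (by omega) he hq' (hr.mul (.of_mem hc)) (by omega))
    rw [associator_swap_right, ih 1 (by omega) he (.of_mem hc) (hq'.mul hr) (by omega), neg_zero]

theorem AssociatorVanishesBelow.succ (h : AssociatorVanishesBelow {a, b} n) :
    AssociatorVanishesBelow {a, b} (n + 1) := by
  intro i j k p q r hp hq hr hn
  have := hq.one_le
  have := hr.one_le
  obtain hi1 | hi2 := Nat.lt_or_ge i 2
  · obtain rfl : i = 1 := by have := hp.one_le; omega
    exact associator_eq_zero_of_mem h hp.mem_of_one hq hr (by omega)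
  · obtain ⟨e, he, p', hp', rfl⟩ := hp.exists_eq_mem_mul h hi2 (by omega)
    exact associator_mul_left_eq_zero (h hp' hq hr (by omega)) (h (.of_mem he) hp' hq (by omega))
      (associator_eq_zero_of_mem h he (hp'.mul hq) hr (by omega))
      (associator_eq_zero_of_mem h he hp' (hq.mul hr) (by omega))

theorem associatorVanishesBelow_pair : ∀ n, AssociatorVanishesBelow ({a, b} : Set R) n
  | 0 => fun _ _ _ _ _ _ _ _ _ hn => absurd hn (Nat.not_lt_zero _)
  | n + 1 => (associatorVanishesBelow_pair n).succ

theorem associator_eq_zero_of_mem_closure_pair {p q r : R}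
    (hp : p ∈ Subsemigroup.closure {a, b}) (hq : q ∈ Subsemigroup.closure {a, b})
    (hr : r ∈ Subsemigroup.closure {a, b}) : associator p q r = 0 := by
  obtain ⟨i, hp⟩ := IsMonomial.exists_of_mem_closure hp
  obtain ⟨j, hq⟩ := IsMonomial.exists_of_mem_closure hq
  obtain ⟨k, hr⟩ := IsMonomial.exists_of_mem_closure hr
  exact associatorVanishesBelow_pair (i + j + k + 1) hp hq hr (Nat.lt_succ_self _)

end Monomials

/-- **Artin's theorem**: in any alternative ring, the subring generated by two
elements is associative. -/
theorem artin_alternative {R : Type*} [NonAssocRing R]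
    (halt_left : ∀ x y : R, x * (x * y) = (x * x) * y)
    (halt_right : ∀ x y : R, (y * x) * x = y * (x * x))
    (a b : R) :
    ∀ x ∈ NonUnitalSubring.closure ({a, b} : Set R),
      ∀ y ∈ NonUnitalSubring.closure ({a, b} : Set R),
        ∀ z ∈ NonUnitalSubring.closure ({a, b} : Set R),
          (x * y) * z = x * (y * z) := by
  have : IsLeftAlternative R := ⟨halt_left⟩
  have : IsRightAlternative R := ⟨fun x y => halt_right y x⟩
  intro x hx y hy z hz
  rw [NonUnitalSubring.mem_closure_iff] at hx hy hz
  exact sub_eq_zero.mp <| AddMonoidHom.associator.apply₃_eq_zero_of_mem_closure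
    (fun _ hp _ hq _ hr => associator_eq_zero_of_mem_closure_pair hp hq hr) hx hy hz
end

section
/- Let O be the complex octonion algebra, and let A ∈ Herm(3,O) be traceless with A² = 0 and A ≠ 0, written with diagonal (−2t, t+s, t−s) and off-diagonal entries x₁, x₂ (first row/column) and x₃ (in the 2×2 lower-right block). Then the following are equivalent: (i) s² + N(x₃) = 0; (ii) N(x₁) = N(x₂) = 0; (iii) t = 0. -/
/-!
Polarizing the multiplicativity of the nondegenerate norm `N` gives the quadratic identity
`x² = T(x) x - N(x) 1` with `T(x) = polar N x 1`, hence `x̄ x = x x̄ = N(x) 1`. So the diagonal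
of the matrix equation `M² = 0` reads `4t² + N(x₁) + N(x₂) = 0`, `(t+s)² + N(x₁) + N(x₃) = 0`,
`(t-s)² + N(x₂) + N(x₃) = 0`, and half of (second + third − first) is `s² + N(x₃) = t²`, from
which all three conditions are equivalent to `t = 0`.
-/

open QuadraticMap

section CompositionAlgebra

variable {R A : Type*} [CommRing R] [NonAssocRing A] [Module R A] {N : QuadraticForm R A}

theorem polar_mul_mul_left (hmul : ∀ x y : A, N (x * y) = N x * N y) (x y z : A) :
    polar N (x * y) (x * z) = N x * polar N y z := by
  simp only [polar, ← mul_add, hmul]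
  ring

theorem polar_mul_add_polar_mul (hmul : ∀ x y : A, N (x * y) = N x * N y) (x w y z : A) :
    polar N (x * y) (w * z) + polar N (w * y) (x * z) = polar N x w * polar N y z := by
  have h := polar_mul_mul_left hmul (x + w) y z
  rw [add_mul, add_mul, polar_add_left, polar_add_right, polar_add_right,
    QuadraticMap.map_add N] at h
  linear_combination h - polar_mul_mul_left hmul x y z - polar_mul_mul_left hmul w y z

theorem mul_self_eq_polar_smul_sub_smul_one (hmul : ∀ x y : A, N (x * y) = N x * N y)
    (hnondeg : ∀ x : A, (∀ y : A, polar N x y = 0) → x = 0) (x : A) :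
    x * x = polar N x 1 • x - N x • (1 : A) := by
  refine sub_eq_zero.mp (hnondeg _ fun z => ?_)
  have h1 := polar_mul_add_polar_mul hmul x 1 x z
  have h2 := polar_mul_mul_left hmul x 1 z
  rw [one_mul, one_mul] at h1
  rw [mul_one] at h2
  rw [polar_sub_left, polar_sub_left, polar_smul_left, polar_smul_left, smul_eq_mul, smul_eq_mul]
  linear_combination h1 - h2

theorem conj_mul_self_eq_smul_one [IsScalarTower R A A] (hmul : ∀ x y : A, N (x * y) = N x * N y)
    (hnondeg : ∀ x : A, (∀ y : A, polar N x y = 0) → x = 0) (x : A) :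
    (polar N x 1 • (1 : A) - x) * x = N x • (1 : A) := by
  rw [sub_mul, smul_mul_assoc, one_mul, mul_self_eq_polar_smul_sub_smul_one hmul hnondeg x]
  abel

theorem mul_conj_self_eq_smul_one [SMulCommClass R A A] (hmul : ∀ x y : A, N (x * y) = N x * N y)
    (hnondeg : ∀ x : A, (∀ y : A, polar N x y = 0) → x = 0) (x : A) :
    x * (polar N x 1 • (1 : A) - x) = N x • (1 : A) := by
  rw [mul_sub, mul_smul_comm, mul_one, mul_self_eq_polar_smul_sub_smul_one hmul hnondeg x]
  abel

theorem map_one_ne_zero_of_map_mul [Nontrivial A] (hmul : ∀ x y : A, N (x * y) = N x * N y)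
    (hnondeg : ∀ x : A, (∀ y : A, polar N x y = 0) → x = 0) : N 1 ≠ 0 := by
  intro h1
  have hN : ∀ x : A, N x = 0 := fun x => by rw [← one_mul x, hmul, h1, zero_mul]
  obtain ⟨x, hx⟩ := exists_ne (0 : A)
  exact hx (hnondeg x fun y => by simp only [polar, hN, sub_zero])

theorem eq_zero_of_smul_one_eq_zero [IsDomain R] (hN1 : N 1 ≠ 0) {c : R}
    (hc : c • (1 : A) = 0) : c = 0 := by
  have h := congrArg N hc
  rw [QuadraticMap.map_smul, QuadraticMap.map_zero, smul_eq_mul] at h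
  exact mul_self_eq_zero.mp ((mul_eq_zero.mp h).resolve_right hN1)

end CompositionAlgebra

section HermitianSquare

variable {R A : Type*} [CommRing R] [NonAssocRing A] [Module R A]
  [SMulCommClass R A A] [IsScalarTower R A A]

theorem smul_one_mul_smul_one (c d : R) :
    (c • (1 : A)) * (d • (1 : A)) = (c * d) • (1 : A) := by
  rw [smul_mul_assoc, mul_smul_comm, one_mul, smul_smul, mul_comm]

theorem hermitian_sq_diag (N : A → R) (conj : A → A) (hl : ∀ x, conj x * x = N x • (1 : A))
    (hr : ∀ x, x * conj x = N x • (1 : A)) (a b c : R) (x₁ x₂ x₃ : A) :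
    let M : Matrix (Fin 3) (Fin 3) A :=
      !![a • 1, conj x₁, conj x₂; x₁, b • 1, conj x₃; x₂, x₃, c • 1]
    (M * M) 0 0 = (a ^ 2 + N x₁ + N x₂) • (1 : A) ∧
      (M * M) 1 1 = (b ^ 2 + N x₁ + N x₃) • (1 : A) ∧
      (M * M) 2 2 = (c ^ 2 + N x₂ + N x₃) • (1 : A) := by
  refine ⟨?_, ?_, ?_⟩ <;>
  simp only [Matrix.mul_apply, Fin.sum_univ_three, Matrix.of_apply, Matrix.cons_val',
    Matrix.cons_val_zero, Matrix.cons_val_one, Matrix.cons_val_two, Matrix.head_cons,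
    Matrix.tail_cons, Matrix.head_fin_const, Matrix.empty_val', Matrix.cons_val_fin_one, hl, hr,
    smul_one_mul_smul_one, add_smul, pow_two] <;>
  abel

end HermitianSquare

theorem sq_add_eq_zero_tfae_of_diag_eqs {K : Type*} [CommRing K] [IsDomain K]
    [NeZero (2 : K)] {t s n₁ n₂ n₃ : K} (e₀ : 4 * t ^ 2 + n₁ + n₂ = 0)
    (e₁ : (t + s) ^ 2 + n₁ + n₃ = 0) (e₂ : (t - s) ^ 2 + n₂ + n₃ = 0) :
    ((s ^ 2 + n₃ = 0) ↔ (n₁ = 0 ∧ n₂ = 0)) ∧ ((s ^ 2 + n₃ = 0) ↔ t = 0) := by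
  have key : s ^ 2 + n₃ = t ^ 2 := by
    refine mul_left_cancel₀ (NeZero.ne (2 : K)) ?_
    linear_combination e₁ + e₂ - e₀
  have ht : s ^ 2 + n₃ = 0 ↔ t = 0 := by rw [key, sq_eq_zero_iff]
  refine ⟨⟨fun h => ?_, fun ⟨h₁, h₂⟩ => ht.mpr ?_⟩, ht⟩
  · obtain rfl := ht.mp h
    exact ⟨by linear_combination e₁ - h, by linear_combination e₂ - h⟩
  · have h4 : (2 : K) * 2 * t ^ 2 = 0 := by linear_combination e₀ - h₁ - h₂
    simpa [NeZero.ne (2 : K)] using h4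

theorem isotropic_vector_part_tfae_general {A : Type*} [NonAssocRing A] [Module ℂ A]
    [SMulCommClass ℂ A A] [IsScalarTower ℂ A A]
    (N : QuadraticForm ℂ A)
    (hmul : ∀ x y : A, N (x * y) = N x * N y)
    (hnondeg : ∀ x : A, (∀ y : A, polar N x y = 0) → x = 0)
    (hdim : Module.finrank ℂ A = 8)
    (conjO : A →ₗ[ℂ] A)
    (hconj : ∀ x : A, conjO x = polar N x 1 • (1 : A) - x)
    (t s : ℂ) (x₁ x₂ x₃ : A)
    (M : Matrix (Fin 3) (Fin 3) A)
    (hM : M = !![(-(2*t)) • 1, conjO x₁, conjO x₂;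
                 x₁, (t + s) • 1, conjO x₃;
                 x₂, x₃, (t - s) • 1])
    (hsq : M * M = 0) :
    ((s ^ 2 + N x₃ = 0) ↔ (N x₁ = 0 ∧ N x₂ = 0)) ∧
    ((s ^ 2 + N x₃ = 0) ↔ t = 0) := by
  have : Nontrivial A := Module.nontrivial_of_finrank_pos (R := ℂ) (by omega)
  have hN1 := map_one_ne_zero_of_map_mul hmul hnondeg
  have hl x : conjO x * x = N x • (1 : A) := by
    rw [hconj]; exact conj_mul_self_eq_smul_one hmul hnondeg x
  have hr x : x * conjO x = N x • (1 : A) := by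
    rw [hconj]; exact mul_conj_self_eq_smul_one hmul hnondeg x
  obtain ⟨d₀, d₁, d₂⟩ :=
    hermitian_sq_diag N conjO hl hr (-(2 * t)) (t + s) (t - s) x₁ x₂ x₃
  rw [← hM, hsq] at d₀ d₁ d₂
  have e₀ := eq_zero_of_smul_one_eq_zero hN1 d₀.symm
  have e₁ := eq_zero_of_smul_one_eq_zero hN1 d₁.symm
  have e₂ := eq_zero_of_smul_one_eq_zero hN1 d₂.symm
  exact sq_add_eq_zero_tfae_of_diag_eqs (by linear_combination e₀) e₁ e₂

/-- For a nonzero traceless `A ∈ Herm(3,O)` with `A² = 0`, written with diagonal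
`(−2t, t+s, t−s)` and off-diagonal entries `x₁, x₂, x₃`, the following are
equivalent: (i) `s² + N(x₃) = 0`; (ii) `N(x₁) = N(x₂) = 0`; (iii) `t = 0`. -/
theorem isotropic_vector_part_tfae {A : Type*} [NonAssocRing A] [Module ℂ A]
    [SMulCommClass ℂ A A] [IsScalarTower ℂ A A]
    (N : QuadraticForm ℂ A)
    (hmul : ∀ x y : A, N (x * y) = N x * N y)
    (hnondeg : ∀ x : A, (∀ y : A, polar N x y = 0) → x = 0)
    (hdim : Module.finrank ℂ A = 8)
    (conjO : A →ₗ[ℂ] A)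
    (hconj : ∀ x : A, conjO x = polar N x 1 • (1 : A) - x)
    (t s : ℂ) (x₁ x₂ x₃ : A)
    (M : Matrix (Fin 3) (Fin 3) A)
    (hM : M = !![(-(2*t)) • 1, conjO x₁, conjO x₂;
                 x₁, (t + s) • 1, conjO x₃;
                 x₂, x₃, (t - s) • 1])
    (hsq : M * M = 0) (hne : M ≠ 0) :
    ((s ^ 2 + N x₃ = 0) ↔ (N x₁ = 0 ∧ N x₂ = 0)) ∧
    ((s ^ 2 + N x₃ = 0) ↔ t = 0) :=
  isotropic_vector_part_tfae_general N hmul hnondeg hdim conjO hconj t s x₁ x₂ x₃ M hM hsq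
end

section
/- For generators g_{r,u} of Spin(9,ℂ) realized inside End_ℂ(O²)⊗ℂ (with r² + N(u) = 1), the induced action on the trace-free hermitian 2×2 octonionic matrix [[s, x],[x̄, −s]] via the vector representation is given by [[s(r²−N(u)) − r⟨x,u⟩, 2rsu + r²x − ux̄u],[2rsū + r²x̄ − ūxū, −s(r²−N(u)) + r⟨x̄,ū⟩]]. -/
/-!
Only composition-algebra identities are needed. Linearizing `N (a b) = N a N b` and using
nondegeneracy gives `a (ā b) = ā (a b) = (b ā) a = N a • b`; linearized once more these say
`L_u L_{x̄} + L_x L_{ū} = ⟨x, u⟩`, and they yield `(u x̄) u = ⟨x, u⟩ u − N u • x`. Multiplying out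
the block matrices `g_{r,u} Φ(s,x) g_{r,−u}` entry by entry and reducing with these identities
gives `Φ` of the stated vector, while the tensor factors `1, i, 1` just multiply to `i`. Conjugating
the formula for `(u x̄) u`, which needs `N 1 = 1`, shows that the off-diagonal entries are again
conjugate to each other.
-/

open QuadraticMap TensorProduct

variable {A : Type*} [NonAssocRing A] [Module ℂ A]
  [SMulCommClass ℂ A A] [IsScalarTower ℂ A A]
  [Module ℝ A] [IsScalarTower ℝ ℂ A]

/-- The operator `Φ(s,x) = [[s, L_x], [L_{x̄}, −s]]` on `O ⊕ O` (the image `κ(V₉)`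
consists of the elements `Φ(s,x) ⊗ i`). -/
def kappaOp (conjO : A →ₗ[ℂ] A) (v : ℂ × A) : Module.End ℂ (A × A) :=
  LinearMap.prod
    (v.1 • LinearMap.fst ℂ A A + (LinearMap.mulLeft ℂ v.2).comp (LinearMap.snd ℂ A A))
    ((LinearMap.mulLeft ℂ (conjO v.2)).comp (LinearMap.fst ℂ A A) - v.1 • LinearMap.snd ℂ A A)

/-- The generator `g_{r,u} = [[r, −L_u], [L_{ū}, r]]` of `Spin(9,ℂ)`
inside `End_ℂ(O²)`; in `End_ℂ(O²) ⊗ ℂ` one takes `g_{r,u} ⊗ 1`. -/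
def spinGen (conjO : A →ₗ[ℂ] A) (r : ℂ) (u : A) : Module.End ℂ (A × A) :=
  LinearMap.prod
    (r • LinearMap.fst ℂ A A - (LinearMap.mulLeft ℂ u).comp (LinearMap.snd ℂ A A))
    ((LinearMap.mulLeft ℂ (conjO u)).comp (LinearMap.fst ℂ A A) + r • LinearMap.snd ℂ A A)

section Composition

variable {R B : Type*} [CommRing R] [NonAssocRing B] [Module R B]

structure IsCompositionNorm (N : QuadraticForm R B) : Prop where
  map_mul : ∀ x y : B, N (x * y) = N x * N y
  nondegenerate : ∀ x : B, (∀ y : B, polar N x y = 0) → x = 0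

def normConj (N : QuadraticForm R B) : B →ₗ[R] B :=
  ((polarBilin N).flip 1).smulRight 1 - LinearMap.id

theorem normConj_apply (N : QuadraticForm R B) (x : B) :
    normConj N x = polar N x 1 • 1 - x :=
  rfl

theorem map_add_eq_add_polar (N : QuadraticForm R B) (a b : B) :
    N (a + b) = N a + N b + polar N a b := by
  rw [polar]; ring

namespace IsCompositionNorm

variable {N : QuadraticForm R B} (hN : IsCompositionNorm N)
include hN

theorem polar_mul_mul_left (a b c : B) :
    polar N (a * b) (a * c) = N a * polar N b c := by
  simp only [polar, ← mul_add, hN.map_mul]; ring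

theorem polar_mul_mul_right (a b c : B) :
    polar N (a * c) (b * c) = polar N a b * N c := by
  simp only [polar, ← add_mul, hN.map_mul]; ring

theorem polar_mul_mul_add_swap_left (a b c d : B) :
    polar N (a * b) (c * d) + polar N (c * b) (a * d) = polar N a c * polar N b d := by
  have h := hN.polar_mul_mul_left (a + c) b d
  rw [add_mul, add_mul, polar_add_left, polar_add_right, polar_add_right,
    map_add_eq_add_polar, hN.polar_mul_mul_left, hN.polar_mul_mul_left] at h
  linear_combination h

theorem polar_mul_mul_add_swap_right (a b c d : B) :
    polar N (a * b) (c * d) + polar N (a * d) (c * b) = polar N a c * polar N b d := by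
  have h := hN.polar_mul_mul_right a c (b + d)
  rw [mul_add, mul_add, polar_add_left, polar_add_right, polar_add_right,
    map_add_eq_add_polar, hN.polar_mul_mul_right, hN.polar_mul_mul_right] at h
  linear_combination h

theorem mul_mul_self_left (a b : B) :
    a * (a * b) = polar N a 1 • (a * b) - N a • b := by
  refine sub_eq_zero.mp (hN.nondegenerate _ fun z => ?_)
  have h := hN.polar_mul_mul_add_swap_left a (a * b) 1 z
  rw [one_mul, one_mul] at h
  rw [polar_sub_left, polar_sub_left, polar_smul_left, polar_smul_left, smul_eq_mul,
    smul_eq_mul]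
  linear_combination h - hN.polar_mul_mul_left a b z

theorem mul_self_mul_right (a b : B) :
    b * a * a = polar N a 1 • (b * a) - N a • b := by
  refine sub_eq_zero.mp (hN.nondegenerate _ fun z => ?_)
  have h := hN.polar_mul_mul_add_swap_right (b * a) a z 1
  rw [mul_one, mul_one] at h
  rw [polar_sub_left, polar_sub_left, polar_smul_left, polar_smul_left, smul_eq_mul,
    smul_eq_mul]
  linear_combination h - hN.polar_mul_mul_right b z a

section Unital

variable [IsDomain R] [Nontrivial B]

-- `N 1` is idempotent, and it cannot vanish since then `N` and hence the polar form would be zero.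
theorem map_one : N 1 = 1 := by
  have hidem : N 1 * N 1 = N 1 := by rw [← hN.map_mul, mul_one]
  have hne : N 1 ≠ 0 := fun h0 => by
    have hzero (z : B) : N z = 0 := by rw [← one_mul z, hN.map_mul, h0, zero_mul]
    exact one_ne_zero <| hN.nondegenerate 1 fun y => by simp [polar, hzero]
  exact mul_left_cancel₀ hne (hidem.trans (mul_one _).symm)

theorem polar_one_one : polar N 1 1 = 2 := by
  rw [polar_self, hN.map_one, two_smul, one_add_one_eq_two]

theorem polar_normConj_one (x : B) : polar N (normConj N x) 1 = polar N x 1 := by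
  rw [normConj_apply, polar_sub_left, polar_smul_left, hN.polar_one_one, smul_eq_mul]
  ring

theorem normConj_normConj (x : B) : normConj N (normConj N x) = x := by
  rw [normConj_apply (x := normConj N x), hN.polar_normConj_one, normConj_apply,
    sub_sub_cancel]

theorem map_normConj (x : B) : N (normConj N x) = N x := by
  rw [normConj_apply, sub_eq_add_neg, map_add_eq_add_polar, QuadraticMap.map_smul,
    QuadraticMap.map_neg, polar_neg_right, polar_smul_left, hN.map_one,
    polar_comm N 1 x, smul_eq_mul, smul_eq_mul]
  ring

theorem polar_normConj_normConj (x u : B) :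
    polar N (normConj N x) (normConj N u) = polar N x u := by
  simp only [normConj_apply, polar_sub_left, polar_sub_right, polar_smul_left,
    polar_smul_right, smul_eq_mul, hN.polar_one_one, polar_comm N 1 u]
  ring

end Unital

variable [IsScalarTower R B B]

theorem normConj_mul_mul_left (a b : B) : normConj N a * (a * b) = N a • b := by
  rw [normConj_apply, sub_mul, smul_mul_assoc, one_mul, hN.mul_mul_self_left,
    sub_sub_cancel]

theorem normConj_mul_mul_add_normConj_mul_mul (x u y : B) :
    normConj N u * (x * y) + normConj N x * (u * y) = polar N x u • y := by
  have h := hN.normConj_mul_mul_left (x + u) y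
  simp only [map_add, add_mul, mul_add, hN.normConj_mul_mul_left, map_add_eq_add_polar] at h
  linear_combination (norm := module) h

variable [SMulCommClass R B B]

theorem mul_normConj_mul_left (a b : B) : a * (normConj N a * b) = N a • b := by
  rw [normConj_apply, sub_mul, smul_mul_assoc, one_mul, mul_sub, mul_smul_comm,
    hN.mul_mul_self_left, sub_sub_cancel]

theorem mul_normConj_mul_right (a b : B) : b * normConj N a * a = N a • b := by
  rw [normConj_apply, mul_sub, mul_smul_comm, mul_one, sub_mul, smul_mul_assoc,
    hN.mul_self_mul_right, sub_sub_cancel]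

theorem mul_normConj_mul_add_mul_normConj_mul (x u y : B) :
    u * (normConj N x * y) + x * (normConj N u * y) = polar N x u • y := by
  have h := hN.mul_normConj_mul_left (x + u) y
  simp only [map_add, add_mul, mul_add, hN.mul_normConj_mul_left, map_add_eq_add_polar] at h
  linear_combination (norm := module) h

theorem mul_normConj_mul_self (u x : B) :
    u * normConj N x * u = polar N x u • u - N u • x := by
  have h := hN.mul_normConj_mul_add_mul_normConj_mul x u 1
  rw [mul_one, mul_one, ← eq_sub_iff_add_eq] at h
  rw [h, sub_mul, smul_mul_assoc, one_mul, hN.mul_normConj_mul_right]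

theorem normConj_mul_normConj_mul_self [IsDomain R] [Nontrivial B] (u x : B) :
    normConj N (u * normConj N x * u) = normConj N u * x * normConj N u := by
  have h := hN.mul_normConj_mul_self (normConj N u) (normConj N x)
  rw [hN.normConj_normConj, hN.polar_normConj_normConj, hN.map_normConj] at h
  rw [h, hN.mul_normConj_mul_self, map_sub, map_smul, map_smul]

end IsCompositionNorm

end Composition

section Spin

variable {B : Type*} [NonAssocRing B] [Module ℂ B] [SMulCommClass ℂ B B] [IsScalarTower ℂ B B]
  {N : QuadraticForm ℂ B}

theorem IsCompositionNorm.spinGen_mul_kappaOp_mul_spinGen_neg (hN : IsCompositionNorm N)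
    (r s : ℂ) (u x : B) :
    spinGen (normConj N) r u * kappaOp (normConj N) (s, x) * spinGen (normConj N) r (-u)
      = kappaOp (normConj N) (s * (r ^ 2 - N u) - r * polar N x u,
          (2 * (r * s)) • u + (r ^ 2) • x - u * normConj N x * u) := by
  have hLuLxbarLu (y : B) :
      u * (normConj N x * (u * y)) = polar N x u • (u * y) - N u • (x * y) := by
    have h := hN.mul_normConj_mul_add_mul_normConj_mul x u (u * y)
    rw [hN.normConj_mul_mul_left, mul_smul_comm] at h
    linear_combination (norm := module) h
  have hLxLubar (y : B) : x * (normConj N u * y) = polar N x u • y - u * (normConj N x * y) :=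
    eq_sub_of_add_eq' (hN.mul_normConj_mul_add_mul_normConj_mul x u y)
  have hLubarLx (y : B) : normConj N u * (x * y) = polar N x u • y - normConj N x * (u * y) :=
    eq_sub_of_add_eq (hN.normConj_mul_mul_add_normConj_mul_mul x u y)
  refine LinearMap.ext fun ⟨a, b⟩ => Prod.ext ?_ ?_
  all_goals
    simp only [kappaOp, spinGen, Module.End.mul_apply, LinearMap.prod_apply, Function.prod,
      LinearMap.add_apply, LinearMap.sub_apply, LinearMap.smul_apply, LinearMap.coe_comp,
      Function.comp_apply, LinearMap.fst_apply, LinearMap.snd_apply, LinearMap.mulLeft_apply,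
      map_neg, map_sub, map_add, map_smul, hN.mul_normConj_mul_self, neg_mul,
      add_mul, mul_sub, sub_mul, smul_mul_assoc, smul_add, smul_sub,
      smul_neg, smul_smul, hLuLxbarLu, hLxLubar, hLubarLx, hN.mul_normConj_mul_left,
      hN.normConj_mul_mul_left]
    module

end Spin

theorem spin9_vector_action_formula_general (N : QuadraticForm ℂ A)
    (hmul : ∀ x y : A, N (x * y) = N x * N y)
    (hnondeg : ∀ x : A, (∀ y : A, polar N x y = 0) → x = 0)
    (hdim : Module.finrank ℂ A = 8)
    (conjO : A →ₗ[ℂ] A)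
    (hconj : ∀ x : A, conjO x = polar N x 1 • (1 : A) - x)
    (r s : ℂ) (u x : A) :
    ((spinGen conjO r u ⊗ₜ[ℝ] (1 : ℂ)) * (kappaOp conjO (s, x) ⊗ₜ[ℝ] Complex.I)
          * (spinGen conjO r (-u) ⊗ₜ[ℝ] (1 : ℂ))
        : Module.End ℂ (A × A) ⊗[ℝ] ℂ)
      = kappaOp conjO (s * (r ^ 2 - N u) - r * polar N x u,
          (2 * (r * s)) • u + (r ^ 2) • x - (u * conjO x) * u) ⊗ₜ[ℝ] Complex.I ∧
    conjO ((2 * (r * s)) • u + (r ^ 2) • x - (u * conjO x) * u)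
      = (2 * (r * s)) • conjO u + (r ^ 2) • conjO x - (conjO u * x) * conjO u := by
  have hN : IsCompositionNorm N := ⟨hmul, hnondeg⟩
  have : Nontrivial A := Module.nontrivial_of_finrank_eq_succ hdim
  obtain rfl : conjO = normConj N := LinearMap.ext hconj
  refine ⟨?_, ?_⟩
  · rw [Algebra.TensorProduct.tmul_mul_tmul, Algebra.TensorProduct.tmul_mul_tmul, one_mul,
      mul_one, hN.spinGen_mul_kappaOp_mul_spinGen_neg]
  · rw [map_sub, map_add, map_smul, map_smul, hN.normConj_mul_normConj_mul_self]

/-- The vector representation `v ↦ g_{r,u} v g_{r,u}⁻¹` (with `g_{r,u}⁻¹ = g_{r,−u}`)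
acts on the trace-free hermitian matrix `[[s, x], [x̄, −s]]` (identified via `Φ` with
`κ(s,x) = Φ(s,x) ⊗ i`) by the formula
`[[s(r²−N u) − r⟨x,u⟩, 2rsu + r²x − ux̄u], [2rsū + r²x̄ − ūxū, −s(r²−N u) + r⟨x̄,ū⟩]]`. -/
theorem spin9_vector_action_formula (N : QuadraticForm ℂ A)
    (hmul : ∀ x y : A, N (x * y) = N x * N y)
    (hnondeg : ∀ x : A, (∀ y : A, polar N x y = 0) → x = 0)
    (hdim : Module.finrank ℂ A = 8)
    (conjO : A →ₗ[ℂ] A)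
    (hconj : ∀ x : A, conjO x = polar N x 1 • (1 : A) - x)
    (r s : ℂ) (u x : A) (hru : r ^ 2 + N u = 1) :
    ((spinGen conjO r u ⊗ₜ[ℝ] (1 : ℂ)) * (kappaOp conjO (s, x) ⊗ₜ[ℝ] Complex.I)
          * (spinGen conjO r (-u) ⊗ₜ[ℝ] (1 : ℂ))
        : Module.End ℂ (A × A) ⊗[ℝ] ℂ)
      = kappaOp conjO (s * (r ^ 2 - N u) - r * polar N x u,
          (2 * (r * s)) • u + (r ^ 2) • x - (u * conjO x) * u) ⊗ₜ[ℝ] Complex.I ∧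
    conjO ((2 * (r * s)) • u + (r ^ 2) • x - (u * conjO x) * u)
      = (2 * (r * s)) • conjO u + (r ^ 2) • conjO x - (conjO u * x) * conjO u :=
  spin9_vector_action_formula_general N hmul hnondeg hdim conjO hconj r s u x
end
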